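/- For all natural numbers n ≥ 1 and 1 ≤ k ≤ n, the binomial-weighted row sum Σ_{m=0}^{n} binom(n, m) * C(n, k, m) equals 0; and for k = 0 it equals 2^n. -/

import Mathlib

open Finset

/-- Generalized binomial (Kravchuk) coefficient:
`C(n,k,m) = Σ_{l=0}^{m} (-1)^l * binom(n-m, k-l) * binom(m, l)`,
with the convention that the binomial vanishes for a negative lower index
(encoded by the `if l ≤ k` guard, since we use natural subtraction). -/
def kravC (n k m : ℕ) : ℤ :=
  ∑ l ∈ Finset.range (m + 1),
    (-1 : ℤ) ^ l * (if l ≤ k then ((n - m).choose (k - l) : ℤ) else 0) * (m.choose l : ℤ)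

/-!
`C(n, k, m)` is the coefficient of `x^k` in `(1 - x)^m (1 + x)^(n - m)`. Weighting by
`binom(n, m)` and summing over `m` gives, by the binomial theorem,
`((1 - x) + (1 + x))^n = 2^n`, a constant polynomial.
-/

open Polynomial

lemma one_sub_X_pow_eq_sum {R : Type*} [CommRing R] (m : ℕ) :
    (1 - X : R[X]) ^ m = ∑ l ∈ range (m + 1), C ((-1 : R) ^ l * m.choose l) * X ^ l := by
  rw [sub_eq_neg_add, add_pow]
  refine sum_congr rfl fun l _ => ?_
  rw [neg_pow, one_pow, mul_one, C_mul, C_pow, C_neg, C_1, map_natCast]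
  ring

lemma kravC_eq_coeff (n k m : ℕ) :
    kravC n k m = ((1 - X : ℤ[X]) ^ m * (1 + X) ^ (n - m)).coeff k := by
  rw [one_sub_X_pow_eq_sum, sum_mul, finsetSum_coeff, kravC]
  refine sum_congr rfl fun l _ => ?_
  rw [mul_assoc (C _), coeff_C_mul, coeff_X_pow_mul', add_comm (1 : ℤ[X]), coeff_X_add_one_pow]
  ring

lemma sum_choose_mul_kravC (n k : ℕ) :
    ∑ m ∈ range (n + 1), (n.choose m : ℤ) * kravC n k m = if k = 0 then 2 ^ n else 0 := by
  have binomial : ∑ m ∈ range (n + 1), (n.choose m : ℤ[X]) * ((1 - X) ^ m * (1 + X) ^ (n - m))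
      = C (2 ^ n) := by
    rw [C_pow, show (C 2 : ℤ[X]) = (1 - X) + (1 + X) by rw [C_ofNat]; ring, add_pow]
    exact sum_congr rfl fun m _ => by ring
  simp_rw [kravC_eq_coeff, ← coeff_natCast_mul, ← finsetSum_coeff, binomial, coeff_C]

theorem kravC_weighted_row_sum_general (n : ℕ) :
    (∀ k : ℕ, 1 ≤ k → k ≤ n →
        (∑ m ∈ Finset.range (n + 1), (n.choose m : ℤ) * kravC n k m) = 0) ∧
    (∑ m ∈ Finset.range (n + 1), (n.choose m : ℤ) * kravC n 0 m) = (2 : ℤ) ^ n :=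
  ⟨fun k hk _ => by rw [sum_choose_mul_kravC, if_neg (by omega)],
    by rw [sum_choose_mul_kravC, if_pos rfl]⟩

theorem kravC_weighted_row_sum (n : ℕ) (hn : 1 ≤ n) :
    (∀ k : ℕ, 1 ≤ k → k ≤ n →
        (∑ m ∈ Finset.range (n + 1), (n.choose m : ℤ) * kravC n k m) = 0) ∧
    (∑ m ∈ Finset.range (n + 1), (n.choose m : ℤ) * kravC n 0 m) = (2 : ℤ) ^ n :=
  kravC_weighted_row_sum_general n
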